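/- Let A ⊆ ℝ^d be bounded and let f be a polyhedral function such that the topological boundary ∂A is contained in S(f) (the set of x where f is not differentiable at prox_f(x)). Then the topological boundary of prox_f(A) can be covered by finitely many hyperplanes; i.e., prox_f(A) is a polyhedron. -/

import Mathlib

open Set RealInnerProductSpace

/-- A function is polyhedral if it is the maximum of finitely many affine functions. -/
def IsPolyhedral {d : ℕ} (g : EuclideanSpace ℝ (Fin d) → ℝ) : Prop :=
  ∃ (n : ℕ) (v : Fin (n + 1) → EuclideanSpace ℝ (Fin d)) (c : Fin (n + 1) → ℝ),
    ∀ x, g x = Finset.univ.sup' Finset.univ_nonempty (fun i => ⟪v i, x⟫ + c i)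

/-- `y` is a proximal point of `f` at `x`: it minimizes `z ↦ f z + ‖x - z‖² / 2`. -/
def IsProxPt {d : ℕ} (f : EuclideanSpace ℝ (Fin d) → ℝ)
    (x y : EuclideanSpace ℝ (Fin d)) : Prop :=
  ∀ z, f y + ‖x - y‖ ^ 2 / 2 ≤ f z + ‖x - z‖ ^ 2 / 2

/-- The generalized strip `S(f)`: points `x` such that `f` is not differentiable at
`prox_f(x)`. -/
def GStrip {d : ℕ} (f : EuclideanSpace ℝ (Fin d) → ℝ) : Set (EuclideanSpace ℝ (Fin d)) :=
  {x | ∀ y, IsProxPt f x y → ¬ DifferentiableAt ℝ f y}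

/-- A set is a polyhedron if its topological boundary can be covered by finitely many
affine hyperplanes. -/
def IsPolyhedronSet {d : ℕ} (P : Set (EuclideanSpace ℝ (Fin d))) : Prop :=
  ∃ (n : ℕ) (u : Fin n → EuclideanSpace ℝ (Fin d)) (a : Fin n → ℝ),
    (∀ i, u i ≠ 0) ∧ frontier P ⊆ ⋃ i, {x | ⟪u i, x⟫ = a i}

set_option linter.unusedSectionVars false

section ProxAux
variable {d : ℕ}


lemma quad_ident (v w y : EuclideanSpace ℝ (Fin d)) (c : ℝ) :
    ⟪v, y⟫ + c + ‖w - y‖ ^ 2 / 2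
      = ‖y - (w - v)‖ ^ 2 / 2 + (⟪v, w - v⟫ + c + ‖v‖ ^ 2 / 2) := by
  simp only [← real_inner_self_eq_norm_sq, inner_sub_left, inner_sub_right]
  rw [real_inner_comm w y, real_inner_comm v y, real_inner_comm w v]
  ring

lemma mid_ident (x a b : EuclideanSpace ℝ (Fin d)) :
    ‖x - (2⁻¹ : ℝ) • (a + b)‖ ^ 2 = ‖x - a‖^2/2 + ‖x - b‖^2/2 - ‖a - b‖^2/4 := by
  simp only [← real_inner_self_eq_norm_sq, inner_sub_left, inner_sub_right,
    real_inner_smul_left, real_inner_smul_right, inner_add_left, inner_add_right]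
  rw [real_inner_comm x a, real_inner_comm x b, real_inner_comm a b]
  ring

section
variable {n : ℕ} {v : Fin (n + 1) → EuclideanSpace ℝ (Fin d)} {c : Fin (n + 1) → ℝ}
  {f : EuclideanSpace ℝ (Fin d) → ℝ}
  (hf : ∀ x, f x = Finset.univ.sup' Finset.univ_nonempty (fun i => ⟪v i, x⟫ + c i))

include hf

lemma le_f (i : Fin (n+1)) (x : EuclideanSpace ℝ (Fin d)) : ⟪v i, x⟫ + c i ≤ f x := by
  rw [hf x]; exact Finset.le_sup' (fun j => ⟪v j, x⟫ + c j) (Finset.mem_univ i)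

lemma f_att (x : EuclideanSpace ℝ (Fin d)) : ∃ i, f x = ⟪v i, x⟫ + c i := by
  obtain ⟨i, -, hi⟩ := Finset.exists_mem_eq_sup' Finset.univ_nonempty (fun i => ⟪v i, x⟫ + c i)
  exact ⟨i, by rw [hf x, hi]⟩

lemma f_mid (a b : EuclideanSpace ℝ (Fin d)) :
    f ((2⁻¹ : ℝ) • (a + b)) ≤ f a / 2 + f b / 2 := by
  rw [hf]
  apply Finset.sup'_le
  intro i _
  have h1 := le_f hf i a
  have h2 := le_f hf i b
  have : ⟪v i, (2⁻¹ : ℝ) • (a + b)⟫ = ⟪v i, a⟫/2 + ⟪v i, b⟫/2 := by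
    rw [real_inner_smul_right, inner_add_right]; ring
  rw [this]; linarith

/-- strong minimality -/
lemma prox_strong {x y₀ : EuclideanSpace ℝ (Fin d)} (h : IsProxPt f x y₀)
    (y : EuclideanSpace ℝ (Fin d)) :
    f y₀ + ‖x - y₀‖ ^ 2 / 2 + ‖y - y₀‖ ^ 2 / 4 ≤ f y + ‖x - y‖ ^ 2 / 2 := by
  have hm := h ((2⁻¹ : ℝ) • (y + y₀))
  have hmid := f_mid hf y y₀
  have hn : ‖x - (2⁻¹ : ℝ) • (y + y₀)‖ ^ 2 = ‖x - y‖^2/2 + ‖x - y₀‖^2/2 - ‖y - y₀‖^2/4 :=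
    mid_ident x y y₀
  linarith

lemma prox_lip {x₁ x₂ y₁ y₂ : EuclideanSpace ℝ (Fin d)}
    (h₁ : IsProxPt f x₁ y₁) (h₂ : IsProxPt f x₂ y₂) :
    ‖y₁ - y₂‖ ≤ 2 * ‖x₁ - x₂‖ := by
  have e₁ := prox_strong hf h₁ y₂
  have e₂ := prox_strong hf h₂ y₁
  have key : ‖y₁ - y₂‖^2 / 2 ≤ ⟪x₁ - x₂, y₁ - y₂⟫ := by
    have expand : ‖x₁ - y₂‖^2 + ‖x₂ - y₁‖^2 - ‖x₁ - y₁‖^2 - ‖x₂ - y₂‖^2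
        = 2 * ⟪x₁ - x₂, y₁ - y₂⟫ := by
      simp only [← real_inner_self_eq_norm_sq, inner_sub_left, inner_sub_right]
      rw [real_inner_comm x₁ y₁, real_inner_comm x₁ y₂, real_inner_comm x₂ y₁,
        real_inner_comm x₂ y₂]
      ring
    have hsym : ‖y₂ - y₁‖ = ‖y₁ - y₂‖ := by rw [← neg_sub, norm_neg]
    rw [hsym] at e₁
    linarith
  have hcs : ⟪x₁ - x₂, y₁ - y₂⟫ ≤ ‖x₁ - x₂‖ * ‖y₁ - y₂‖ := real_inner_le_norm _ _
  rcases eq_or_lt_of_le (norm_nonneg (y₁ - y₂)) with h0 | h0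
  · rw [← h0]; positivity
  · nlinarith [norm_nonneg (x₁ - x₂)]

end


section LocalAffine
variable {n : ℕ} {v : Fin (n + 1) → EuclideanSpace ℝ (Fin d)} {c : Fin (n + 1) → ℝ}
  {f : EuclideanSpace ℝ (Fin d) → ℝ}
  (hf : ∀ x, f x = Finset.univ.sup' Finset.univ_nonempty (fun i => ⟪v i, x⟫ + c i))
include hf


/-- Local affineness off the hyperplane arrangement. -/
lemma local_affine {z : EuclideanSpace ℝ (Fin d)}
    (hz : ∀ i j, v i ≠ v j → ⟪v i - v j, z⟫ ≠ c j - c i) :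
    ∃ (i₀ : Fin (n+1)) (ε : ℝ), 0 < ε ∧
      ∀ y ∈ Metric.ball z ε, f y = ⟪v i₀, y⟫ + c i₀ := by
  obtain ⟨i₀, hi₀⟩ := f_att hf z
  have hsame : ∀ j, ⟪v j, z⟫ + c j = f z → (v j = v i₀ ∧ c j = c i₀) := by
    intro j hj
    have hv : v j = v i₀ := by
      by_contra hne
      apply hz j i₀ hne
      rw [inner_sub_left]
      have : ⟪v j, z⟫ + c j = ⟪v i₀, z⟫ + c i₀ := by rw [hj, hi₀]
      linarith
    refine ⟨hv, ?_⟩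
    have : ⟪v j, z⟫ + c j = ⟪v i₀, z⟫ + c i₀ := by rw [hj, hi₀]
    rw [hv] at this
    linarith
  have hev : ∀ᶠ y in nhds z, ∀ j, ⟪v j, y⟫ + c j ≤ ⟪v i₀, y⟫ + c i₀ := by
    rw [Filter.eventually_all]
    intro j
    rcases lt_or_eq_of_le (le_f hf j z) with hlt | heq
    · rw [hi₀] at hlt
      have hc : Continuous fun y : EuclideanSpace ℝ (Fin d) =>
          (⟪v i₀, y⟫ + c i₀) - (⟪v j, y⟫ + c j) := by
        have h1 : Continuous fun y : EuclideanSpace ℝ (Fin d) => ⟪v i₀, y⟫ :=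
          continuous_const.inner continuous_id
        have h2 : Continuous fun y : EuclideanSpace ℝ (Fin d) => ⟪v j, y⟫ :=
          continuous_const.inner continuous_id
        exact (h1.add continuous_const).sub (h2.add continuous_const)
      have : ∀ᶠ y in nhds z, 0 < (⟪v i₀, y⟫ + c i₀) - (⟪v j, y⟫ + c j) :=
        (hc.continuousAt (x := z)).eventually_const_lt (by beta_reduce; linarith)
      filter_upwards [this] with y hy; linarith
    · obtain ⟨hv, hc⟩ := hsame j heq
      filter_upwards with y; rw [hv, hc]
  rw [Metric.eventually_nhds_iff] at hev
  obtain ⟨ε, hε, hball⟩ := hev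
  refine ⟨i₀, ε, hε, fun y hy => ?_⟩
  have h1 := hball (Metric.mem_ball.mp hy)
  refine le_antisymm ?_ (le_f hf i₀ y)
  rw [hf y]
  exact Finset.sup'_le _ _ fun j _ => h1 j

end LocalAffine

section ProxFormula
variable {f : EuclideanSpace ℝ (Fin d) → ℝ} {u : EuclideanSpace ℝ (Fin d)} {C : ℝ}
  {z : EuclideanSpace ℝ (Fin d)} {ε : ℝ}
  (hle : ∀ y, ⟪u, y⟫ + C ≤ f y)
  (hball : ∀ y ∈ Metric.ball z ε, f y = ⟪u, y⟫ + C)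
  (hε : 0 < ε)

include hle hball hε

/-- B1: the prox point of x under local affineness at the prox point is x - u. -/
lemma prox_eq_of_local_affine {x : EuclideanSpace ℝ (Fin d)} (hz : IsProxPt f x z) :
    z = x - u := by
  by_contra hne
  set y' := x - u with hy'
  have hr : 0 < ‖z - y'‖ := by
    rw [norm_pos_iff, sub_ne_zero]; exact hne
  set r := ‖z - y'‖ with hrdef
  set t : ℝ := min (1/2) (ε / (2 * r)) with ht
  have ht0 : 0 < t := lt_min (by norm_num) (by positivity)
  have ht1 : t ≤ 1/2 := min_le_left _ _
  set yt := z + t • (y' - z) with hyt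
  have hytz : ‖yt - z‖ = t * r := by
    rw [hyt]
    simp only [add_sub_cancel_left, norm_smul, Real.norm_eq_abs, abs_of_pos ht0]
    rw [← neg_sub z y', norm_neg]
  have hytball : yt ∈ Metric.ball z ε := by
    rw [Metric.mem_ball, dist_eq_norm, hytz]
    calc t * r ≤ (ε / (2 * r)) * r := by
          apply mul_le_mul_of_nonneg_right (min_le_right _ _) (le_of_lt hr)
      _ = ε / 2 := by field_simp
      _ < ε := by linarith
  have hyty' : ‖yt - y'‖ = (1 - t) * r := by
    have : yt - y' = (1 - t) • (z - y') := by
      rw [hyt]; module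
    rw [this, norm_smul, Real.norm_eq_abs, abs_of_pos (by linarith)]
  have hq1 := quad_ident u x z C
  have hq2 := quad_ident u x yt C
  have hfz : f z = ⟪u, z⟫ + C := hball z (by simpa [Metric.mem_ball] using hε)
  have hfyt : f yt = ⟪u, yt⟫ + C := hball yt hytball
  have hmin := hz yt
  rw [hfz, hfyt] at hmin
  -- hmin : ⟪u,z⟫+C+‖x-z‖²/2 ≤ ⟪u,yt⟫+C+‖x-yt‖²/2
  rw [hq1, hq2] at hmin
  -- ‖z - y'‖²/2 ≤ ‖yt - y'‖²/2
  have : r^2 ≤ ((1-t)*r)^2 := by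
    rw [← hyty']
    have : ‖z - (x - u)‖ ^2 ≤ ‖yt - (x - u)‖^2 := by linarith
    calc r^2 = ‖z - (x-u)‖^2 := by rw [hrdef, hy']
      _ ≤ ‖yt - (x-u)‖^2 := this
      _ = ‖yt - y'‖^2 := by rw [hy']
  nlinarith [mul_pos ht0 (mul_pos hr hr)]

omit hε in
/-- B2: any prox point of w for ‖w - x‖-close w is w - u, assuming z = x - u. -/
lemma prox_formula_near {x : EuclideanSpace ℝ (Fin d)} (hzx : z = x - u)
    {w y : EuclideanSpace ℝ (Fin d)} (hw : ‖w - x‖ < ε) (hy : IsProxPt f w y) :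
    y = w - u := by
  have hball' : w - u ∈ Metric.ball z ε := by
    rw [Metric.mem_ball, dist_eq_norm, hzx]
    simpa using hw
  have hf' : f (w - u) = ⟪u, w - u⟫ + C := hball _ hball'
  have hmin := hy (w - u)
  rw [hf'] at hmin
  have hq1 := quad_ident u w y C
  have hq2 := quad_ident u w (w - u) C
  have hley := hle y
  -- ⟪u,y⟫+C+‖w-y‖²/2 ≤ f y + ‖w-y‖²/2 ≤ ⟪u,w-u⟫+C+‖w-(w-u)‖²/2
  have key : ‖y - (w - u)‖^2/2 ≤ ‖(w-u) - (w-u)‖^2/2 := by linarith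
  simp only [sub_self, norm_zero] at key
  have h0 : ‖y - (w-u)‖ = 0 := by nlinarith [norm_nonneg (y - (w-u))]
  rw [norm_eq_zero, sub_eq_zero] at h0
  exact h0

end ProxFormula

lemma diff_of_local_affine {f : EuclideanSpace ℝ (Fin d) → ℝ}
    {u : EuclideanSpace ℝ (Fin d)} {C : ℝ} {z : EuclideanSpace ℝ (Fin d)} {ε : ℝ}
    (hε : 0 < ε) (hball : ∀ y ∈ Metric.ball z ε, f y = ⟪u, y⟫ + C) :
    DifferentiableAt ℝ f z := by
  have hg : DifferentiableAt ℝ (fun y : EuclideanSpace ℝ (Fin d) => ⟪u, y⟫ + C) z := by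
    apply DifferentiableAt.add_const
    exact (innerSL ℝ u).differentiableAt
  apply hg.congr_of_eventuallyEq
  filter_upwards [Metric.ball_mem_nhds z hε] with y hy
  exact hball y hy

end ProxAux

/-- If `A` is bounded, `f` is polyhedral, `p` is the proximal map of `f`,
and `∂A ⊆ S(f)`, then `prox_f(A)` is a polyhedron. -/
theorem prox_image_polyhedron (d : ℕ) (A : Set (EuclideanSpace ℝ (Fin d)))
    (hA : Bornology.IsBounded A)
    (f : EuclideanSpace ℝ (Fin d) → ℝ) (hf : IsPolyhedral f)
    (p : EuclideanSpace ℝ (Fin d) → EuclideanSpace ℝ (Fin d))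
    (hp : ∀ x, IsProxPt f x (p x))
    (hbd : frontier A ⊆ GStrip f) :
    IsPolyhedronSet (p '' A) := by
  obtain ⟨n, v, c, hf⟩ := hf
  -- p is continuous
  have hpcont : Continuous p := by
    have : LipschitzWith 2 p := by
      intro x₁ x₂
      rw [edist_dist, edist_dist, dist_eq_norm, dist_eq_norm]
      have := prox_lip hf (hp x₁) (hp x₂)
      rw [← ENNReal.ofReal_coe_nnreal]
      rw [← ENNReal.ofReal_mul (by norm_num)]
      apply ENNReal.ofReal_le_ofReal
      simpa using this
    exact this.continuous
  -- key claim: frontier (p '' A) is inside the arrangement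
  have key : ∀ z ∈ frontier (p '' A),
      ∃ i j, v i ≠ v j ∧ ⟪v i - v j, z⟫ = c j - c i := by
    intro z hz
    -- z = p x for some x in closure A
    have hzcl : z ∈ p '' (closure A) := by
      have h1 : IsCompact (p '' closure A) := (hA.isCompact_closure).image hpcont
      have h2 : closure (p '' A) ⊆ p '' closure A :=
        closure_minimal (image_mono subset_closure) h1.isClosed
      exact h2 hz.1
    obtain ⟨x, hxA, hpx⟩ := hzcl
    by_contra hno
    push_neg at hno
    have hno' : ∀ i j, v i ≠ v j → ⟪v i - v j, z⟫ ≠ c j - c i := fun i j h => hno i j h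
    obtain ⟨i₀, ε, hε, hball⟩ := local_affine hf hno'
    have hle' : ∀ y, ⟪v i₀, y⟫ + c i₀ ≤ f y := le_f hf i₀
    have hzx : z = x - v i₀ := by
      apply prox_eq_of_local_affine hle' hball hε
      exact hpx ▸ hp x
    rw [closure_eq_interior_union_frontier] at hxA
    rcases hxA with hxint | hxfr
    · -- interior case: z is interior point of p '' A, contradiction
      obtain ⟨δ, hδ, hδball⟩ := Metric.isOpen_iff.mp isOpen_interior x hxint
      have hzint : z ∈ interior (p '' A) := by
        rw [mem_interior]
        refine ⟨Metric.ball z (min ε δ), ?_, Metric.isOpen_ball,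
          Metric.mem_ball_self (lt_min hε hδ)⟩
        intro w' hw'
        set w := w' + v i₀ with hw
        have hwx : ‖w - x‖ < min ε δ := by
          have : w - x = w' - z := by rw [hw, hzx]; abel
          rw [this]
          simpa [Metric.mem_ball, dist_eq_norm] using hw'
        have hwA : w ∈ A := interior_subset (hδball (by
          simp [Metric.mem_ball, dist_eq_norm]
          exact lt_of_lt_of_le hwx (min_le_right _ _)))
        refine ⟨w, hwA, ?_⟩
        have := prox_formula_near hle' hball hzx
          (lt_of_lt_of_le hwx (min_le_left _ _)) (hp w)
        rw [this, hw]; abel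
      exact hz.2 hzint
    · -- frontier case: f not differentiable at z, contradiction
      have hstrip := hbd hxfr
      have hdiff : DifferentiableAt ℝ f z := diff_of_local_affine hε hball
      rw [← hpx] at hdiff
      exact hstrip (p x) (hp x) hdiff
  -- now produce the hyperplanes
  by_cases hdeg : ∀ i j : Fin (n+1), v i = v j
  · refine ⟨0, Fin.elim0, Fin.elim0, fun i => i.elim0, ?_⟩
    intro z hz
    obtain ⟨i, j, hne, -⟩ := key z hz
    exact absurd (hdeg i j) hne
  · push_neg at hdeg
    obtain ⟨i₀, j₀, hne₀⟩ := hdeg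
    classical
    refine ⟨(n+1) * (n+1),
      fun k => if v (finProdFinEquiv.symm k).1 ≠ v (finProdFinEquiv.symm k).2
        then v (finProdFinEquiv.symm k).1 - v (finProdFinEquiv.symm k).2
        else v i₀ - v j₀,
      fun k => if v (finProdFinEquiv.symm k).1 ≠ v (finProdFinEquiv.symm k).2
        then c (finProdFinEquiv.symm k).2 - c (finProdFinEquiv.symm k).1
        else 0, ?_, ?_⟩
    · intro k
      beta_reduce
      by_cases h : v (finProdFinEquiv.symm k).1 ≠ v (finProdFinEquiv.symm k).2
      · rw [if_pos h]; exact sub_ne_zero.mpr h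
      · rw [if_neg h]; exact sub_ne_zero.mpr hne₀
    · intro z hz
      obtain ⟨i, j, hne, heq⟩ := key z hz
      rw [mem_iUnion]
      refine ⟨finProdFinEquiv (i, j), ?_⟩
      simp only [mem_setOf_eq, Equiv.symm_apply_apply]
      rw [if_pos hne, if_pos hne]
      exact heq
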